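/- arXiv:2304.00909 — 3 statements merged into one kernel-verified Lean document; each statement's English description precedes it below -/
import Mathlib

section
/- For 0 < α < 1 and f : [0,∞) → ℝ continuously differentiable with f and f' of exponential order, the Laplace transform of the Caputo fractional derivative satisfies L[∂₀₊^α f](s) = s^α L[f](s) − s^{α−1} f(0) for all real s sufficiently large. -/
open MeasureTheory Set Filter Real

/-- Caputo fractional derivative of order `α`. -/
noncomputable def caputo (α : ℝ) (f : ℝ → ℝ) (t : ℝ) : ℝ :=
  (1 / Real.Gamma (1 - α)) * ∫ τ in (0:ℝ)..t, (t - τ) ^ (-α) * deriv f τ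

/-- Laplace transform. -/
noncomputable def laplace (f : ℝ → ℝ) (s : ℝ) : ℝ :=
  ∫ t in Ioi (0:ℝ), Real.exp (-s * t) * f t

section LaplaceCaputoHelpers

open Topology

lemma setIntegral_Ioi_comp_add (g : ℝ → ℝ) (τ : ℝ) :
    ∫ t in Ioi τ, g t = ∫ t in Ioi 0, g (t + τ) := by
  rw [← integral_indicator measurableSet_Ioi, ← integral_indicator measurableSet_Ioi,
    ← integral_add_right_eq_self (fun t => (Ioi τ).indicator g t) τ]
  congr 1
  ext x
  by_cases h : 0 < x
  · rw [indicator_of_mem (by simpa using h), indicator_of_mem (by simpa using h)]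
  · rw [indicator_of_notMem (by simpa using h), indicator_of_notMem (by simpa using h)]

lemma integrableOn_Ioi_comp_add {g : ℝ → ℝ} (τ : ℝ)
    (h : IntegrableOn (fun t => g (t + τ)) (Ioi 0)) : IntegrableOn g (Ioi τ) := by
  rw [← integrable_indicator_iff measurableSet_Ioi] at h ⊢
  have := h.comp_add_right (-τ)
  refine this.congr (Filter.Eventually.of_forall fun x => ?_)
  have hmem : (0:ℝ) < x + -τ ↔ τ < x := by constructor <;> intro <;> linarith
  by_cases hx : τ < x <;>
    simp [indicator_apply, mem_Ioi, hmem, hx, neg_add_cancel_right]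

lemma base_integrable {s α : ℝ} (hs : 0 < s) (hα1 : α < 1) :
    IntegrableOn (fun t : ℝ => Real.exp (-(s * t)) * t ^ (-α)) (Ioi (0:ℝ)) := by
  have h1 : IntegrableOn (fun x : ℝ => Real.exp (-x) * x ^ ((1 - α) - 1)) (Ioi (0:ℝ)) :=
    Real.GammaIntegral_convergent (by linarith)
  have h2 : IntegrableOn (fun x : ℝ => Real.exp (-(s * x)) * (s * x) ^ ((1 - α) - 1))
      (Ioi (0:ℝ)) := by
    have := (integrableOn_Ioi_comp_mul_left_iff
      (fun x : ℝ => Real.exp (-x) * x ^ ((1 - α) - 1)) 0 hs).mpr (by simpa using h1)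
    simpa using this
  have h3 : IntegrableOn (fun x : ℝ => s ^ α * (Real.exp (-(s * x)) * (s * x) ^ ((1 - α) - 1)))
      (Ioi (0:ℝ)) := h2.const_mul (s ^ α)
  refine h3.congr_fun (fun x hx => ?_) measurableSet_Ioi
  have hx0 : (0:ℝ) ≤ x := le_of_lt hx
  dsimp only
  rw [show (1:ℝ) - α - 1 = -α by ring, Real.mul_rpow hs.le hx0]
  have hss : s ^ α * s ^ (-α) = 1 := by
    rw [← Real.rpow_add hs]; simp
  calc s ^ α * (Real.exp (-(s * x)) * (s ^ (-α) * x ^ (-α)))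
      = (s ^ α * s ^ (-α)) * (Real.exp (-(s * x)) * x ^ (-α)) := by ring
    _ = Real.exp (-(s * x)) * x ^ (-α) := by rw [hss, one_mul]

lemma kernel_integrable {s α : ℝ} (hs : 0 < s) (hα1 : α < 1) (τ : ℝ) :
    IntegrableOn (fun t => Real.exp (-s * t) * (t - τ) ^ (-α)) (Ioi τ) := by
  apply integrableOn_Ioi_comp_add
  have h3 : IntegrableOn (fun x : ℝ => Real.exp (-s*τ) * (Real.exp (-(s * x)) * x ^ (-α)))
      (Ioi (0:ℝ)) := (base_integrable hs hα1).const_mul _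
  refine h3.congr_fun (fun t _ => ?_) measurableSet_Ioi
  show _ = Real.exp (-s * (t + τ)) * (t + τ - τ) ^ (-α)
  rw [add_sub_cancel_right, show -s*(t+τ) = -(s*t) + -s*τ by ring, Real.exp_add]
  ring

lemma kernel_integral {s α : ℝ} (hs : 0 < s) (hα1 : α < 1) (τ : ℝ) :
    ∫ t in Ioi τ, Real.exp (-s * t) * (t - τ) ^ (-α)
      = Real.exp (-s * τ) * (Real.Gamma (1 - α) * s ^ (α - 1)) := by
  rw [setIntegral_Ioi_comp_add]
  have h : ∀ t : ℝ, Real.exp (-s * (t + τ)) * (t + τ - τ) ^ (-α)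
      = Real.exp (-s * τ) * (t ^ ((1 - α) - 1) * Real.exp (-(s * t))) := by
    intro t
    rw [add_sub_cancel_right, show (1:ℝ) - α - 1 = -α by ring,
      show -s*(t+τ) = -(s*t) + -s*τ by ring, Real.exp_add]
    ring
  simp_rw [h]
  rw [MeasureTheory.integral_const_mul,
    integral_rpow_mul_exp_neg_mul_Ioi (by linarith : (0:ℝ) < 1 - α) hs,
    one_div, Real.inv_rpow hs.le, ← Real.rpow_neg hs.le, neg_sub]
  ring

lemma expord_integrable {s γ C : ℝ} (hsγ : γ < s) {k : ℝ → ℝ} (hk : Continuous k)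
    (hb : ∀ t ≥ (0:ℝ), |k t| ≤ C * Real.exp (γ * t)) :
    IntegrableOn (fun t => Real.exp (-s * t) * k t) (Ioi (0:ℝ)) := by
  have hint : IntegrableOn (fun t : ℝ => C * Real.exp (-(s - γ) * t)) (Ioi (0:ℝ)) :=
    (exp_neg_integrableOn_Ioi 0 (by linarith)).const_mul C
  refine Integrable.mono' hint ?_ ?_
  · exact ((Real.continuous_exp.comp (continuous_const.mul continuous_id)).mul
      hk).aestronglyMeasurable
  · filter_upwards [ae_restrict_mem measurableSet_Ioi] with t ht
    have h1 := hb t (le_of_lt ht)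
    have h2 : ‖Real.exp (-s*t) * k t‖ = Real.exp (-s*t) * |k t| := by
      rw [norm_mul, Real.norm_eq_abs, Real.norm_eq_abs, abs_of_pos (Real.exp_pos _)]
    rw [h2]
    calc Real.exp (-s*t) * |k t| ≤ Real.exp (-s*t) * (C * Real.exp (γ*t)) :=
          mul_le_mul_of_nonneg_left h1 (Real.exp_pos _).le
      _ = C * Real.exp (-(s-γ)*t) := by
          rw [show -(s-γ)*t = -s*t + γ*t by ring, Real.exp_add]; ring

lemma laplace_deriv_eq {s γ C : ℝ} (hsγ : γ < s) {f : ℝ → ℝ}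
    (hf : ContDiff ℝ 1 f)
    (hfo : ∀ t ≥ (0:ℝ), |f t| ≤ C * Real.exp (γ * t))
    (hfo' : ∀ t ≥ (0:ℝ), |deriv f t| ≤ C * Real.exp (γ * t)) :
    ∫ t in Ioi (0:ℝ), Real.exp (-s * t) * deriv f t
      = s * (∫ t in Ioi (0:ℝ), Real.exp (-s * t) * f t) - f 0 := by
  have hg : Continuous (deriv f) := hf.continuous_deriv le_rfl
  have hcf : Continuous f := hf.continuous
  have hdf : ∀ x : ℝ, HasDerivAt f (deriv f x) x :=
    fun x => ((hf.differentiable one_ne_zero) x).hasDerivAt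
  set u : ℝ → ℝ := fun t => Real.exp (-s*t) * f t with hu_def
  have I1 : IntegrableOn (fun t => Real.exp (-s*t) * deriv f t) (Ioi (0:ℝ)) :=
    expord_integrable hsγ hg hfo'
  have I2 : IntegrableOn (fun t => Real.exp (-s*t) * f t) (Ioi (0:ℝ)) :=
    expord_integrable hsγ hcf hfo
  have I3 : IntegrableOn (fun t : ℝ => -s * (Real.exp (-s*t) * f t)) (Ioi (0:ℝ)) :=
    I2.const_mul (-s)
  have hu : ∀ x : ℝ, HasDerivAt u
      (-s * (Real.exp (-s*x) * f x) + Real.exp (-s*x) * deriv f x) x := by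
    intro x
    have he : HasDerivAt (fun t : ℝ => Real.exp (-s*t)) (-s * Real.exp (-s*x)) x := by
      have h0 : HasDerivAt (fun t : ℝ => -s * t) (-s) x := by
        simpa using (hasDerivAt_id x).const_mul (-s)
      simpa [mul_comm] using h0.exp
    have h := he.mul (hdf x)
    exact h.congr_deriv (by ring)
  have htend : Tendsto u atTop (𝓝 0) := by
    have h1 : Tendsto (fun t : ℝ => (s - γ) * t) atTop atTop :=
      tendsto_id.const_mul_atTop (by linarith)
    have h2 : Tendsto (fun t : ℝ => C * Real.exp (-((s-γ) * t))) atTop (𝓝 (C * 0)) :=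
      (Real.tendsto_exp_neg_atTop_nhds_zero.comp h1).const_mul C
    rw [mul_zero] at h2
    refine squeeze_zero_norm' ?_ h2
    filter_upwards [eventually_ge_atTop (0:ℝ)] with t ht
    have h1b := hfo t ht
    have h2b : ‖u t‖ = Real.exp (-s*t) * |f t| := by
      rw [hu_def]
      rw [norm_mul, Real.norm_eq_abs, Real.norm_eq_abs, abs_of_pos (Real.exp_pos _)]
    rw [h2b]
    calc Real.exp (-s*t) * |f t| ≤ Real.exp (-s*t) * (C * Real.exp (γ*t)) :=
          mul_le_mul_of_nonneg_left h1b (Real.exp_pos _).le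
      _ = C * Real.exp (-((s-γ)*t)) := by
          rw [show -((s-γ)*t) = -s*t + γ*t by ring, Real.exp_add]; ring
  have hFTC := integral_Ioi_of_hasDerivAt_of_tendsto
    (a := 0) (f := u)
    (f' := fun t => -s * (Real.exp (-s*t) * f t) + Real.exp (-s*t) * deriv f t)
    (hu 0).continuousAt.continuousWithinAt (fun x _ => hu x) (I3.add I1) htend
  have hu0 : u 0 = f 0 := by simp [hu_def]
  rw [MeasureTheory.integral_add I3 I1, MeasureTheory.integral_const_mul, hu0] at hFTC
  linarith [hFTC]

end LaplaceCaputoHelpers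

open Topology in
/-- Laplace transform of the Caputo derivative:
`L[∂₀₊^α f](s) = s^α L[f](s) − s^(α−1) f 0` for all sufficiently large real `s`. -/
theorem laplace_caputo (α : ℝ) (hα : 0 < α) (hα1 : α < 1)
    (f : ℝ → ℝ) (hf : ContDiff ℝ 1 f)
    (C γ : ℝ) (hC : 0 ≤ C)
    (hfo : ∀ t ≥ (0:ℝ), |f t| ≤ C * Real.exp (γ * t))
    (hfo' : ∀ t ≥ (0:ℝ), |deriv f t| ≤ C * Real.exp (γ * t)) :
    ∃ s₀ : ℝ, ∀ s > s₀,
      laplace (caputo α f) s = s ^ α * laplace f s - s ^ (α - 1) * f 0 := by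
  refine ⟨max γ 0, fun s hs => ?_⟩
  have hs0 : 0 < s := lt_of_le_of_lt (le_max_right γ 0) hs
  have hsγ : γ < s := lt_of_le_of_lt (le_max_left γ 0) hs
  have hg : Continuous (deriv f) := hf.continuous_deriv le_rfl
  set K : ℝ := Real.Gamma (1 - α) * s ^ (α - 1) with hK_def
  have hΓpos : 0 < Real.Gamma (1 - α) := Real.Gamma_pos_of_pos (by linarith)
  have hKpos : 0 < K := mul_pos hΓpos (Real.rpow_pos_of_pos hs0 _)
  set F : ℝ → ℝ → ℝ := fun t τ =>
    (Ioi τ).indicator (fun t' => Real.exp (-s*t') * ((t' - τ) ^ (-α) * deriv f τ)) t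
    with hF_def
  -- measurability
  have hFm : Measurable (Function.uncurry F) := by
    have heq : Function.uncurry F
        = Set.indicator {q : ℝ × ℝ | q.2 < q.1}
          (fun q => Real.exp (-s*q.1) *
            (Real.exp (Real.log (q.1 - q.2) * (-α)) * deriv f q.2)) := by
      funext p
      rcases p with ⟨t, τ⟩
      by_cases h : τ < t
      · have h2 : (t - τ) ^ (-α) = Real.exp (Real.log (t - τ) * (-α)) :=
          Real.rpow_def_of_pos (by linarith) _
        simp [Function.uncurry, hF_def, indicator, h, h2]
      · simp [Function.uncurry, hF_def, indicator, h]
    rw [heq]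
    refine Measurable.indicator ?_ (isOpen_lt continuous_snd continuous_fst).measurableSet
    exact (Real.measurable_exp.comp (measurable_fst.const_mul (-s))).mul
      ((Real.measurable_exp.comp
        ((Real.measurable_log.comp (measurable_fst.sub measurable_snd)).mul_const (-α))).mul
        (hg.measurable.comp measurable_snd))
  -- per-τ facts
  have hrestrict : ∀ τ : ℝ, 0 < τ →
      (volume.restrict (Ioi (0:ℝ))).restrict (Ioi τ) = volume.restrict (Ioi τ) := by
    intro τ hτ
    rw [Measure.restrict_restrict measurableSet_Ioi,
      inter_eq_left.mpr (Ioi_subset_Ioi hτ.le)]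
  have hint_t : ∀ τ : ℝ, 0 < τ →
      Integrable (fun t => F t τ) (volume.restrict (Ioi (0:ℝ))) := by
    intro τ hτ
    rw [show (fun t => F t τ)
      = (Ioi τ).indicator (fun t' => Real.exp (-s*t') * ((t' - τ) ^ (-α) * deriv f τ)) from rfl,
      integrable_indicator_iff measurableSet_Ioi]
    rw [IntegrableOn, hrestrict τ hτ]
    have hI : IntegrableOn (fun t => (Real.exp (-s*t) * (t - τ) ^ (-α)) * deriv f τ)
        (Ioi τ) := (kernel_integrable hs0 hα1 τ).mul_const _
    exact hI.congr_fun (fun t _ => mul_assoc _ _ _) measurableSet_Ioi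
  have hval_t : ∀ τ : ℝ, 0 < τ →
      ∫ t in Ioi (0:ℝ), F t τ = (Real.exp (-s*τ) * K) * deriv f τ := by
    intro τ hτ
    rw [show (fun t => F t τ)
      = (Ioi τ).indicator (fun t' => Real.exp (-s*t') * ((t' - τ) ^ (-α) * deriv f τ)) from rfl,
      integral_indicator measurableSet_Ioi, hrestrict τ hτ]
    calc ∫ t in Ioi τ, Real.exp (-s*t) * ((t - τ) ^ (-α) * deriv f τ)
        = ∫ t in Ioi τ, (Real.exp (-s*t) * (t - τ) ^ (-α)) * deriv f τ := by
          congr 1; funext t; ring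
      _ = (∫ t in Ioi τ, Real.exp (-s*t) * (t - τ) ^ (-α)) * deriv f τ := by
          rw [MeasureTheory.integral_mul_const]
      _ = (Real.exp (-s*τ) * K) * deriv f τ := by rw [kernel_integral hs0 hα1 τ]
  have hnorm_t : ∀ τ : ℝ, 0 < τ →
      ∫ t in Ioi (0:ℝ), ‖F t τ‖ = (Real.exp (-s*τ) * K) * |deriv f τ| := by
    intro τ hτ
    have h1 : (fun t => ‖F t τ‖)
        = (Ioi τ).indicator
          (fun t' => ‖Real.exp (-s*t') * ((t' - τ) ^ (-α) * deriv f τ)‖) := by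
      funext t
      rw [hF_def]
      exact norm_indicator_eq_indicator_norm _ t
    rw [h1, integral_indicator measurableSet_Ioi, hrestrict τ hτ]
    calc ∫ t in Ioi τ, ‖Real.exp (-s*t) * ((t - τ) ^ (-α) * deriv f τ)‖
        = ∫ t in Ioi τ, (Real.exp (-s*t) * (t - τ) ^ (-α)) * |deriv f τ| := by
          refine setIntegral_congr_fun measurableSet_Ioi (fun t ht => ?_)
          have hpos : (0:ℝ) ≤ (t - τ) ^ (-α) :=
            Real.rpow_nonneg (by simp at ht; linarith) _
          rw [norm_mul, norm_mul, Real.norm_eq_abs, Real.norm_eq_abs, Real.norm_eq_abs,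
            abs_of_pos (Real.exp_pos _), abs_of_nonneg hpos]
          ring
      _ = (∫ t in Ioi τ, Real.exp (-s*t) * (t - τ) ^ (-α)) * |deriv f τ| := by
          rw [MeasureTheory.integral_mul_const]
      _ = (Real.exp (-s*τ) * K) * |deriv f τ| := by rw [kernel_integral hs0 hα1 τ]
  -- integrability of the norm-integral in τ
  have hbase : IntegrableOn (fun τ => Real.exp (-s*τ) * (K * |deriv f τ|)) (Ioi (0:ℝ)) := by
    refine expord_integrable (C := K * C) hsγ (continuous_const.mul hg.abs) (fun t ht => ?_)
    have := hfo' t ht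
    rw [abs_of_nonneg (by positivity)]
    calc K * |deriv f t| ≤ K * (C * Real.exp (γ * t)) :=
          mul_le_mul_of_nonneg_left this hKpos.le
      _ = K * C * Real.exp (γ * t) := by ring
  have hnormint : Integrable (fun τ => ∫ t in Ioi (0:ℝ), ‖F t τ‖)
      (volume.restrict (Ioi (0:ℝ))) := by
    refine hbase.congr ?_
    filter_upwards [ae_restrict_mem measurableSet_Ioi] with τ hτ
    rw [hnorm_t τ hτ]
    ring
  -- product integrability
  have hintF : Integrable (Function.uncurry F)
      ((volume.restrict (Ioi (0:ℝ))).prod (volume.restrict (Ioi (0:ℝ)))) := by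
    refine (integrable_prod_iff' hFm.aestronglyMeasurable).mpr ⟨?_, ?_⟩
    · filter_upwards [ae_restrict_mem measurableSet_Ioi] with τ hτ
      exact hint_t τ hτ
    · exact hnormint
  -- swap
  have hswap := MeasureTheory.integral_integral_swap (f := F) hintF
  -- per-t identity
  have hper_t : ∀ t : ℝ, 0 < t →
      Real.exp (-s*t) * caputo α f t
        = (1 / Real.Gamma (1 - α)) * ∫ τ in Ioi (0:ℝ), F t τ := by
    intro t ht
    have h1 : (fun τ => F t τ)
        = fun τ => (Iio t).indicator
            (fun τ' => Real.exp (-s*t) * ((t - τ') ^ (-α) * deriv f τ')) τ := by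
      funext τ
      by_cases h : τ < t
      · simp [hF_def, indicator, h]
      · simp [hF_def, indicator, h]
    rw [h1, MeasureTheory.setIntegral_indicator measurableSet_Iio, Ioi_inter_Iio,
      MeasureTheory.integral_const_mul]
    simp only [caputo]
    rw [intervalIntegral.integral_of_le ht.le, MeasureTheory.integral_Ioc_eq_integral_Ioo]
    ring
  -- final computation
  have hpow : s ^ α = s ^ (α - 1) * s := by
    rw [← Real.rpow_add_one hs0.ne' (α - 1)]
    norm_num
  simp only [laplace]
  calc ∫ t in Ioi (0:ℝ), Real.exp (-s*t) * caputo α f t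
      = ∫ t in Ioi (0:ℝ), (1 / Real.Gamma (1 - α)) * ∫ τ in Ioi (0:ℝ), F t τ :=
        setIntegral_congr_fun measurableSet_Ioi (fun t ht => hper_t t ht)
    _ = (1 / Real.Gamma (1 - α)) * ∫ t in Ioi (0:ℝ), ∫ τ in Ioi (0:ℝ), F t τ :=
        MeasureTheory.integral_const_mul _ _
    _ = (1 / Real.Gamma (1 - α)) * ∫ τ in Ioi (0:ℝ), ∫ t in Ioi (0:ℝ), F t τ := by
        rw [hswap]
    _ = (1 / Real.Gamma (1 - α)) * ∫ τ in Ioi (0:ℝ), K * (Real.exp (-s*τ) * deriv f τ) := by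
        refine congrArg _ (setIntegral_congr_fun measurableSet_Ioi fun τ hτ => ?_)
        rw [hval_t τ hτ]
        ring
    _ = (1 / Real.Gamma (1 - α)) * (K * ∫ τ in Ioi (0:ℝ), Real.exp (-s*τ) * deriv f τ) := by
        rw [MeasureTheory.integral_const_mul]
    _ = (1 / Real.Gamma (1 - α)) *
          (K * (s * (∫ t in Ioi (0:ℝ), Real.exp (-s*t) * f t) - f 0)) := by
        rw [laplace_deriv_eq hsγ hf hfo hfo']
    _ = s ^ α * (∫ t in Ioi (0:ℝ), Real.exp (-s*t) * f t) - s ^ (α - 1) * f 0 := by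
        rw [hK_def, hpow]
        field_simp
end

section
/- The Gaver–Stehfest coefficients μ_i = (−1)^{M/2+i} Σ_{k=⌈(i+1)/2⌉}^{min(i, M/2)} k^{M/2}(2k)! / [(M/2−k)! k! (k−1)! (i−k)! (2k−i)!] satisfy Σ_{i=1}^{M} μ_i = 0 for every even positive integer M ≥ 2. -/
/-! Swapping the two summations, the coefficient of each fixed `k` is a multiple of
`∑_{i=k}^{2k} (-1)^i / ((i-k)! (2k-i)!) = (-1)^k / k! · ∑_j (-1)^j C(k,j)`,
which vanishes for `k ≥ 1`. -/

/-- The Gaver–Stehfest coefficients `μ_i` for an even parameter `M`: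
`μ_i = (−1)^(M/2+i) Σ_{k=[(i+1)/2]}^{min(i,M/2)} k^(M/2)(2k)! /
  [(M/2−k)! k! (k−1)! (i−k)! (2k−i)!]`. -/
def gsCoeff (M i : ℕ) : ℚ :=
  (-1 : ℚ) ^ (M / 2 + i) *
    ∑ k ∈ Finset.Icc ((i + 1) / 2) (min i (M / 2)),
      ((k : ℚ) ^ (M / 2) * (Nat.factorial (2 * k) : ℚ)) /
        ((Nat.factorial (M / 2 - k) : ℚ) * (Nat.factorial k : ℚ) *
          (Nat.factorial (k - 1) : ℚ) * (Nat.factorial (i - k) : ℚ) *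
          (Nat.factorial (2 * k - i) : ℚ))

open Finset

section
variable {K : Type*} [Field K] [CharZero K]

theorem sum_range_neg_one_pow_div_factorial_mul_factorial {k : ℕ} (hk : k ≠ 0) :
    ∑ j ∈ range (k + 1), (-1 : K) ^ j / (j.factorial * (k - j).factorial) = 0 := by
  have hterm : ∀ j ∈ range (k + 1), (-1 : K) ^ j / (j.factorial * (k - j).factorial) =
      (k.factorial : K)⁻¹ * ((-1) ^ j * k.choose j) := by
    intro j hj
    have hfact : (k.factorial : K) ≠ 0 := Nat.cast_ne_zero.mpr k.factorial_ne_zero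
    rw [Nat.cast_choose K (Nat.lt_succ_iff.mp (mem_range.mp hj))]
    field_simp
  have halternating : ∑ j ∈ range (k + 1), (-1 : K) ^ j * k.choose j = 0 := by
    exact_mod_cast congrArg (Int.cast : ℤ → K)
      ((Int.alternating_sum_range_choose (n := k)).trans (if_neg hk))
  rw [sum_congr rfl hterm, ← mul_sum, halternating, mul_zero]

theorem sum_Icc_neg_one_pow_div_factorial_mul_factorial {k : ℕ} (hk : k ≠ 0) :
    ∑ i ∈ Icc k (2 * k), (-1 : K) ^ i / ((i - k).factorial * (2 * k - i).factorial) = 0 := by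
  have hreindex : Icc k (2 * k) = (range (k + 1)).map (addLeftEmbedding k) := by
    ext i
    simp only [mem_Icc, mem_map, mem_range, addLeftEmbedding_apply]
    constructor
    · exact fun h => ⟨i - k, by omega, by omega⟩
    · rintro ⟨j, hj, rfl⟩
      omega
  rw [hreindex, sum_map]
  calc _ = ∑ j ∈ range (k + 1), (-1 : K) ^ k * ((-1) ^ j / (j.factorial * (k - j).factorial)) := by
        refine sum_congr rfl fun j hj => ?_
        have hj : j ≤ k := Nat.lt_succ_iff.mp (mem_range.mp hj)
        simp only [addLeftEmbedding_apply, pow_add, Nat.add_sub_cancel_left,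
          show 2 * k - (k + j) = k - j by omega]
        ring
    _ = 0 := by rw [← mul_sum, sum_range_neg_one_pow_div_factorial_mul_factorial hk, mul_zero]

end

theorem gsCoeff_sum_eq_zero_general (M : ℕ) :
    ∑ i ∈ Finset.Icc 1 M, gsCoeff M i = 0 := by
  set n := M / 2 with hn
  simp only [gsCoeff, ← hn, mul_sum]
  rw [sum_comm' (t' := Icc 1 n) (s' := fun k => Icc k (2 * k))
    (fun i k => by simp only [mem_Icc, le_min_iff]; omega)]
  refine sum_eq_zero fun k hk => ?_
  have hk : k ≠ 0 := by simp only [mem_Icc] at hk; omega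
  calc _ = (-1 : ℚ) ^ n * k ^ n * (2 * k).factorial /
          ((n - k).factorial * k.factorial * (k - 1).factorial) *
        ∑ i ∈ Icc k (2 * k), (-1 : ℚ) ^ i / ((i - k).factorial * (2 * k - i).factorial) := by
        rw [mul_sum]
        refine sum_congr rfl fun i _ => ?_
        rw [pow_add]
        field_simp
    _ = 0 := by rw [sum_Icc_neg_one_pow_div_factorial_mul_factorial hk, mul_zero]

/-- The Gaver–Stehfest coefficients sum to zero: `Σ_{i=1}^M μ_i = 0`
for every even positive integer `M ≥ 2`. -/
theorem gsCoeff_sum_eq_zero (M : ℕ) (hM : Even M) (hM2 : 2 ≤ M) :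
    ∑ i ∈ Finset.Icc 1 M, gsCoeff M i = 0 :=
  gsCoeff_sum_eq_zero_general M
end

section
/- For 0 < α < 1, λ > 0, and real s > λ^{1/α}, the Laplace transform of t ↦ E_α(−λ t^α) equals s^{α−1} / (s^α + λ). -/
open MeasureTheory Set

/-- The Mittag-Leffler function `E_α(z) = Σ_{k=0}^∞ z^k / Γ(αk+1)`. -/
noncomputable def mittagLeffler (α : ℝ) (z : ℝ) : ℝ :=
  ∑' k : ℕ, z ^ k / Real.Gamma (α * k + 1)

/-- For `0 < α < 1`, `λ > 0`, and real `s > λ^(1/α)`,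
`L[E_α(−λ t^α)](s) = s^(α−1)/(s^α + λ)`. -/
theorem laplace_mittagLeffler (α lam : ℝ) (hα : 0 < α) (hα1 : α < 1) (hlam : 0 < lam) :
    ∀ s : ℝ, lam ^ ( (1:ℝ) / α) < s →
      laplace (fun t => mittagLeffler α (-lam * t ^ α)) s =
        s ^ (α - 1) / (s ^ α + lam) := by
  intro s hs
  have hs0 : 0 < s := lt_trans (Real.rpow_pos_of_pos hlam _) hs
  have hsa0 : 0 < s ^ α := Real.rpow_pos_of_pos hs0 _
  have hsa : lam < s ^ α := by
    have h := Real.rpow_lt_rpow (Real.rpow_pos_of_pos hlam _).le hs hα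
    rwa [← Real.rpow_mul hlam.le, one_div, inv_mul_cancel₀ hα.ne', Real.rpow_one] at h
  -- the summands
  set F : ℕ → ℝ → ℝ := fun k t =>
    (-lam) ^ k / Real.Gamma (α * k + 1) * (t ^ (α * k) * Real.exp (-(s * t))) with hF
  have hΓpos : ∀ k : ℕ, 0 < Real.Gamma (α * k + 1) := by
    intro k
    apply Real.Gamma_pos_of_pos
    positivity
  -- pointwise identity on Ioi 0
  have hpt : ∀ t ∈ Ioi (0:ℝ),
      Real.exp (-s * t) * mittagLeffler α (-lam * t ^ α) = ∑' k, F k t := by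
    intro t ht
    rw [mittagLeffler, ← tsum_mul_left]
    refine tsum_congr fun k => ?_
    have h1 : (-lam * t ^ α) ^ k = (-lam) ^ k * t ^ (α * (k:ℝ)) := by
      rw [mul_pow, ← Real.rpow_natCast (t ^ α) k, ← Real.rpow_mul (le_of_lt ht)]
    rw [h1, neg_mul, hF]
    ring
  -- value of the basic integral
  have hI : ∀ k : ℕ, ∫ t in Ioi (0:ℝ), t ^ (α * (k:ℝ)) * Real.exp (-(s * t)) =
      (1 / s) ^ (α * (k:ℝ) + 1) * Real.Gamma (α * k + 1) := by
    intro k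
    have := Real.integral_rpow_mul_exp_neg_mul_Ioi
      (a := α * k + 1) (r := s) (by positivity) hs0
    simpa using this
  -- integrability of each summand
  have hint : ∀ k : ℕ, IntegrableOn (F k) (Ioi (0:ℝ)) := by
    intro k
    apply Integrable.const_mul
    have h := integrableOn_rpow_mul_exp_neg_mul_rpow
      (s := α * k) (p := 1) (b := s)
      (lt_of_lt_of_le neg_one_lt_zero (by positivity)) one_pos hs0
    simp only [Real.rpow_one, neg_mul] at h
    exact h
  -- integral of the norm of each summand
  have hnorm : ∀ k : ℕ, ∫ t in Ioi (0:ℝ), ‖F k t‖ =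
      (1 / s) * (lam * (1 / s) ^ α) ^ k := by
    intro k
    have hcongr : ∀ t ∈ Ioi (0:ℝ), ‖F k t‖ =
        lam ^ k / Real.Gamma (α * k + 1) * (t ^ (α * (k:ℝ)) * Real.exp (-(s * t))) := by
      intro t ht
      rw [hF]
      rw [Real.norm_eq_abs, abs_mul, abs_div, abs_pow, abs_neg, abs_of_pos hlam,
        abs_of_pos (hΓpos k), abs_of_pos (mul_pos (Real.rpow_pos_of_pos ht _) (Real.exp_pos _))]
    rw [setIntegral_congr_fun measurableSet_Ioi hcongr, integral_const_mul, hI k]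
    rw [← Real.rpow_natCast (lam * (1/s)^α) k, Real.mul_rpow hlam.le (by positivity),
      ← Real.rpow_natCast lam k, ← Real.rpow_mul (by positivity : (0:ℝ) ≤ 1/s),
      Real.rpow_add (by positivity : (0:ℝ) < 1/s), Real.rpow_one]
    field_simp [(hΓpos k).ne']
  -- summability of integrals of norms
  have hr1 : lam * (1 / s) ^ α < 1 := by
    rw [Real.div_rpow zero_le_one hs0.le, Real.one_rpow, mul_one_div, div_lt_one hsa0]
    exact hsa
  have hsum : Summable fun k : ℕ => ∫ t in Ioi (0:ℝ), ‖F k t‖ := by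
    apply Summable.congr (f := fun k : ℕ => (1 / s) * (lam * (1 / s) ^ α) ^ k)
    · exact (summable_geometric_of_lt_one (by positivity) hr1).mul_left _
    · intro k; exact (hnorm k).symm
  -- swap integral and sum
  rw [laplace, setIntegral_congr_fun measurableSet_Ioi hpt,
    ← MeasureTheory.integral_tsum_of_summable_integral_norm hint hsum]
  -- compute each integral
  have hterm : ∀ k : ℕ, ∫ t in Ioi (0:ℝ), F k t =
      (1 / s) * ((-lam) * (1 / s) ^ α) ^ k := by
    intro k
    rw [hF]
    simp only
    rw [integral_const_mul, hI k]
    rw [mul_pow, ← Real.rpow_natCast ((1/s)^α) k, ← Real.rpow_mul (by positivity : (0:ℝ) ≤ 1/s),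
      Real.rpow_add (by positivity : (0:ℝ) < 1/s) (α * k) 1, Real.rpow_one]
    field_simp [(hΓpos k).ne']
  rw [tsum_congr hterm, tsum_mul_left, tsum_geometric_of_norm_lt_one (by
    rw [Real.norm_eq_abs, abs_mul, abs_neg, abs_of_pos hlam, abs_of_pos (by positivity)]
    exact hr1)]
  have h1s : (1:ℝ)/s ^ α = ((1:ℝ)/s) ^ α := by
    rw [Real.div_rpow zero_le_one hs0.le, Real.one_rpow]
  rw [Real.rpow_sub hs0, Real.rpow_one]
  field_simp [h1s.symm]
  rw [← h1s, sub_neg_eq_add, div_eq_iff (by positivity)]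
  rw [mul_add, mul_one, ← mul_assoc, mul_comm (s ^ α) lam, mul_assoc, mul_one_div_cancel hsa0.ne', mul_one]
end
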